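/- arXiv:2505.14961 — 6 statements merged into one kernel-verified Lean document; each statement's English description precedes it below -/
import Mathlib

section
/- Let R be a commutative Noetherian ring and M a finitely generated R-module. If tr_R(M) is isomorphic to R as an R-module, then tr_R(M) = R. -/
/-- The trace ideal of an `R`-module `M`: the sum of the images of all
`R`-linear maps `M → R`. -/
def traceIdeal (R M : Type*) [CommRing R] [AddCommGroup M] [Module R M] : Ideal R :=
  ⨆ f : M →ₗ[R] R, LinearMap.range f

/-- If the trace ideal of a finitely generated module `M` over a commutative Noetherian
ring `R` is isomorphic to `R` as an `R`-module, then `tr_R(M) = R`. -/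
theorem traceIdeal_eq_top_of_iso (R M : Type*) [CommRing R] [IsNoetherianRing R]
    [AddCommGroup M] [Module R M] [Module.Finite R M]
    (h : Nonempty ((traceIdeal R M) ≃ₗ[R] R)) :
    traceIdeal R M = ⊤ := by
  obtain ⟨φ⟩ := h
  -- every linear map from the trace ideal to R has image inside the trace ideal
  have key : ∀ x (hx : x ∈ traceIdeal R M), φ ⟨x, hx⟩ ∈ traceIdeal R M := by
    intro x hx
    refine Submodule.iSup_induction' (motive := fun y (hy : y ∈ traceIdeal R M) =>
      φ ⟨y, hy⟩ ∈ traceIdeal R M) (fun f : M →ₗ[R] R => LinearMap.range f) ?_ ?_ ?_ hx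
    · rintro g y ⟨m, rfl⟩
      have hmem : ∀ m, g m ∈ traceIdeal R M := fun m =>
        le_iSup (fun f : M →ₗ[R] R => LinearMap.range f) g ⟨m, rfl⟩
      have heq : φ ⟨g m, hmem m⟩ =
          (φ.toLinearMap ∘ₗ (g.codRestrict (traceIdeal R M) hmem)) m := by
        simp [LinearMap.codRestrict]
      rw [heq]
      exact le_iSup (fun f : M →ₗ[R] R => LinearMap.range f)
        (φ.toLinearMap ∘ₗ (g.codRestrict (traceIdeal R M) hmem)) ⟨m, rfl⟩
    · show φ ⟨0, zero_mem _⟩ ∈ traceIdeal R M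
      have : (⟨0, zero_mem _⟩ : traceIdeal R M) = 0 := rfl
      rw [this, map_zero]
      exact zero_mem _
    · intro a b ha hb hpa hpb
      show φ ⟨a + b, add_mem ha hb⟩ ∈ traceIdeal R M
      have : (⟨a + b, add_mem ha hb⟩ : traceIdeal R M) = ⟨a, ha⟩ + ⟨b, hb⟩ := rfl
      rw [this, map_add]
      exact add_mem hpa hpb
  -- the iso is surjective, so 1 is in the image, hence 1 ∈ traceIdeal R M
  obtain ⟨⟨y, hy⟩, hy1⟩ := φ.surjective 1
  have h1 : (1 : R) ∈ traceIdeal R M := hy1 ▸ key y hy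
  exact Ideal.eq_top_of_isUnit_mem _ h1 isUnit_one
end

section
/- Let R be a discrete valuation ring (equivalently, a one-dimensional regular local ring) with maximal ideal m. Then there is no finitely generated R-module M with tr_R(M) = m; that is, R admits no full-trace module. -/
/-- A discrete valuation ring admits no full-trace module: there is no finitely
generated module whose trace ideal equals the maximal ideal. -/
theorem no_full_trace_module_of_dvr (R : Type*) [CommRing R] [IsDomain R]
    [IsDiscreteValuationRing R] :
    ∀ (M : Type*) [AddCommGroup M] [Module R M] [Module.Finite R M],
      traceIdeal R M ≠ IsLocalRing.maximalIdeal R := by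
  intro M _ _ _ h
  obtain ⟨π, hπ⟩ := IsDiscreteValuationRing.exists_irreducible R
  have hspan : IsLocalRing.maximalIdeal R = Ideal.span {π} :=
    (IsDiscreteValuationRing.irreducible_iff_uniformizer π).mp hπ
  have hπ0 : π ≠ 0 := hπ.ne_zero
  -- the family of ranges is directed, since ideals are totally ordered
  have hdir : Directed (· ≤ ·) (fun f : M →ₗ[R] R => LinearMap.range f) := by
    intro f g
    rcases Std.Total.total (r := (· ≤ · : Ideal R → Ideal R → Prop))
      (LinearMap.range f) (LinearMap.range g) with hle | hle
    · exact ⟨g, hle, le_rfl⟩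
    · exact ⟨f, le_rfl, hle⟩
  have hπmem : π ∈ traceIdeal R M := by
    rw [h, hspan]; exact Ideal.mem_span_singleton_self π
  rw [traceIdeal, Submodule.mem_iSup_of_directed _ hdir] at hπmem
  obtain ⟨f, x, hx⟩ := hπmem
  -- range f ≤ span {π}
  have hrange : ∀ y : M, f y ∈ Ideal.span ({π} : Set R) := by
    intro y
    rw [← hspan, ← h]
    exact le_iSup (fun f : M →ₗ[R] R => LinearMap.range f) f ⟨y, rfl⟩
  -- build g with f = π • g
  let t : R →ₗ[R] R := LinearMap.toSpanSingleton R R π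
  have ht : Function.Injective t := fun a b hab => by
    have : a * π = b * π := hab
    exact mul_right_cancel₀ hπ0 this
  have htr : LinearMap.range t = Ideal.span {π} := by
    exact (LinearMap.span_singleton_eq_range R R π).symm
  let e : R ≃ₗ[R] LinearMap.range t := LinearEquiv.ofInjective t ht
  let g : M →ₗ[R] R := e.symm.toLinearMap ∘ₗ
    LinearMap.codRestrict (LinearMap.range t) f (fun y => htr ▸ hrange y)
  have hg1 : g x = 1 := by
    have : e 1 = (⟨f x, htr ▸ hrange x⟩ : LinearMap.range t) := by
      apply Subtype.ext
      show (1 : R) • π = f x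
      rw [one_smul, hx]
    have := congrArg e.symm this
    rw [e.symm_apply_apply] at this
    exact this.symm
  have h1 : (1 : R) ∈ traceIdeal R M :=
    le_iSup (fun f : M →ₗ[R] R => LinearMap.range f) g ⟨x, hg1⟩
  rw [h] at h1
  exact (IsLocalRing.maximalIdeal.isMaximal R).ne_top (Ideal.eq_top_of_isUnit_mem _ h1 isUnit_one)
end

section
/- Let (R, m) be an Artinian local principal ideal ring with m = Rx and m^n = 0, n minimal with n ≥ 2. Then tr_R((0 :_R x)) = (0 :_R x); in particular tr_R(m^{n-1}) = m^{n-1}. -/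
open IsLocalRing

/-- Let `(R, m)` be an Artinian local principal ideal ring with `m = Rx` and `m^n = 0`,
`n ≥ 2` minimal. Then `tr_R((0 :_R x)) = (0 :_R x)`; in particular
`tr_R(m^{n-1}) = m^{n-1}`. -/
theorem traceIdeal_annihilator (R : Type*) [CommRing R] [IsArtinianRing R] [IsLocalRing R]
    [IsPrincipalIdealRing R] (x : R) (hx : maximalIdeal R = Ideal.span {x}) (n : ℕ)
    (hn : 2 ≤ n) (hzero : maximalIdeal R ^ n = ⊥) (hmin : maximalIdeal R ^ (n - 1) ≠ ⊥) :
    traceIdeal R ↥((⊥ : Ideal R).colon (Ideal.span {x}))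
        = (⊥ : Ideal R).colon (Ideal.span {x}) ∧
      traceIdeal R ↥(maximalIdeal R ^ (n - 1)) = maximalIdeal R ^ (n - 1) := by
  have hx1 : x ∈ maximalIdeal R := hx ▸ Ideal.mem_span_singleton_self x
  have hpow : ∀ k : ℕ, maximalIdeal R ^ k = Ideal.span {x ^ k} := fun k => by
    rw [hx, Ideal.span_singleton_pow]
  have hsucc : maximalIdeal R ^ n = maximalIdeal R ^ (n - 1) * maximalIdeal R := by
    rw [← pow_succ]; congr 1; omega
  -- the annihilator of x is m^(n-1)
  have hann : (⊥ : Ideal R).colon (Ideal.span {x}) = maximalIdeal R ^ (n - 1) := by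
    apply le_antisymm
    · intro a ha
      have hax : a * x = 0 := by
        have := Ideal.mem_colon_span_singleton.mp ha
        simpa using this
      by_cases ha0 : a = 0
      · simp [ha0]
      · classical
        have hex : ∃ k, a ∉ maximalIdeal R ^ k := ⟨n, by rw [hzero]; simpa⟩
        have hknot : a ∉ maximalIdeal R ^ Nat.find hex := Nat.find_spec hex
        have hkpos : 0 < Nat.find hex := by
          rcases Nat.eq_zero_or_pos (Nat.find hex) with h | h
          · rw [h] at hknot; simp at hknot
          · exact h
        have hmem : a ∈ maximalIdeal R ^ (Nat.find hex - 1) :=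
          not_not.mp (Nat.find_min hex (by omega))
        generalize hkk : Nat.find hex = k at hknot hkpos hmem
        -- write a = x^(k-1) * c with c a unit
        rw [hpow, Ideal.mem_span_singleton] at hmem
        obtain ⟨c, rfl⟩ := hmem
        have hcu : IsUnit c := by
          by_contra hcu
          apply hknot
          have hc : c ∈ maximalIdeal R := hcu
          have : x ^ (k - 1) * c ∈ maximalIdeal R ^ (k - 1) * maximalIdeal R :=
            Ideal.mul_mem_mul (by rw [hpow]; exact Ideal.mem_span_singleton_self _) hc
          rwa [← pow_succ, Nat.sub_add_cancel hkpos] at this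
        -- then x^k = 0, so m^k = ⊥, so k ≥ n by minimality
        have hxk : x ^ k = 0 := by
          obtain ⟨u, rfl⟩ := hcu
          have : (u : R) * x ^ k = 0 := by
            have := hax
            rw [mul_comm (x ^ (k - 1)) (u : R), mul_assoc, ← pow_succ,
              Nat.sub_add_cancel hkpos] at this
            exact this
          calc x ^ k = (u⁻¹ : Rˣ) * ((u : R) * x ^ k) := by
                rw [← mul_assoc, Units.inv_mul, one_mul]
            _ = 0 := by rw [this, mul_zero]
        have hkn : n ≤ k := by
          by_contra hkn
          apply hmin
          have hle : maximalIdeal R ^ (n - 1) ≤ maximalIdeal R ^ k :=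
            Ideal.pow_le_pow_right (by omega)
          have : maximalIdeal R ^ k = ⊥ := by
            rw [hpow, hxk, Ideal.span_singleton_eq_bot]
          exact le_bot_iff.mp (this ▸ hle)
        exact Ideal.pow_le_pow_right (by omega) (by
          rw [hpow, Ideal.mem_span_singleton]; exact ⟨c, rfl⟩ :
            x ^ (k - 1) * c ∈ maximalIdeal R ^ (k - 1))
    · intro a ha
      rw [Ideal.mem_colon_span_singleton]
      have : a * x ∈ maximalIdeal R ^ n := by
        rw [hsucc]; exact Ideal.mul_mem_mul ha hx1
      rw [hzero] at this
      simpa using this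
  have key : ∀ I : Ideal R, I = maximalIdeal R ^ (n - 1) → traceIdeal R ↥I = I := by
    intro I hI
    apply le_antisymm
    · apply iSup_le
      intro f a ha
      obtain ⟨⟨y, hy⟩, rfl⟩ := ha
      have hxy : x * y = 0 := by
        have h1 : y * x ∈ maximalIdeal R ^ n := by
          rw [hsucc]
          exact Ideal.mul_mem_mul (show y ∈ maximalIdeal R ^ (n - 1) from hI ▸ hy) hx1
        rw [hzero] at h1
        simpa [mul_comm] using h1
      have hsmul : x • (⟨y, hy⟩ : I) = 0 := Subtype.ext (by simpa [smul_eq_mul] using hxy)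
      have hfz : x * f ⟨y, hy⟩ = 0 := by
        rw [← smul_eq_mul, ← f.map_smul, hsmul, f.map_zero]
      have hmemc : f ⟨y, hy⟩ ∈ (⊥ : Ideal R).colon (Ideal.span {x}) := by
        rw [Ideal.mem_colon_span_singleton]
        simpa [smul_eq_mul, mul_comm] using hfz
      rw [hann] at hmemc
      exact hI.symm ▸ hmemc
    · have h := le_iSup (fun f : ↥I →ₗ[R] R => LinearMap.range f) (Submodule.subtype I)
      simpa [traceIdeal, Submodule.range_subtype] using h
  constructor
  · rw [hann]; exact key _ rfl
  · exact key _ rfl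
end

section
/- Let (R, m, k) be a non-regular Noetherian local principal ideal ring with m^2 ≠ 0. Then Ω^{2i+1}_R(k) is a full-trace R-module for all i ≥ 0, while Ω^{2i+2}_R(k) is not full-trace for any i ≥ 0. -/
open IsLocalRing

/-- A Noetherian local ring is regular if its maximal ideal can be generated by
(Krull dimension of `R`) many elements. -/
def IsRegularLocal (R : Type*) [CommRing R] [IsLocalRing R] : Prop :=
  ∃ s : Finset R, Ideal.span (s : Set R) = IsLocalRing.maximalIdeal R ∧
    (s.card : WithBot ℕ∞) = ringKrullDim R

section A
variable {R : Type} [CommRing R] [IsNoetherianRing R] [IsLocalRing R]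

lemma prime_eq_bot_of_ne (t : R) (ht : Ideal.span {t} = maximalIdeal R)
    (p : Ideal R) (hp : p.IsPrime) (hpm : p ≠ maximalIdeal R) : p = ⊥ := by
  have htp : t ∉ p := by
    intro h
    exact hpm (le_antisymm (le_maximalIdeal hp.ne_top)
      (ht ▸ (Ideal.span_le.mpr (Set.singleton_subset_iff.mpr h))))
  have key : ∀ n, p ≤ Ideal.span {t ^ n} := by
    intro n
    induction n with
    | zero => simp [Ideal.span_singleton_one]
    | succ n ih =>
      intro x hx
      obtain ⟨r, hr⟩ := Ideal.mem_span_singleton'.mp (ih hx)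
      have hrp : r ∈ p := by
        have : ¬ (t ^ n ∈ p) := fun h => htp (hp.mem_of_pow_mem n h)
        rcases hp.mem_or_mem (hr ▸ hx) with h | h
        · exact h
        · exact absurd h this
      obtain ⟨s, hs⟩ := Ideal.mem_span_singleton'.mp
        (ht ▸ le_maximalIdeal hp.ne_top hrp : r ∈ Ideal.span {t})
      exact Ideal.mem_span_singleton'.mpr ⟨s, by rw [← hr, ← hs]; ring⟩
  have : p ≤ ⨅ n : ℕ, maximalIdeal R ^ n := by
    refine le_iInf fun n => ?_
    rw [← ht, Ideal.span_singleton_pow]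
    exact key n
  rw [Ideal.iInf_pow_eq_bot_of_isLocalRing (maximalIdeal R)
      (IsLocalRing.maximalIdeal.isMaximal R).ne_top] at this
  exact le_bot_iff.mp this


lemma regular_of_not_nilpotent (t : R) (ht : Ideal.span {t} = maximalIdeal R)
    (hn : ¬ IsNilpotent t) : IsRegularLocal R := by
  have ht0 : t ≠ 0 := fun h => hn (h ▸ ⟨1, by simp⟩)
  -- there is a prime not containing t
  have : t ∉ nilradical R := fun h => hn (mem_nilradical.mp h)
  rw [nilradical_eq_sInf, Ideal.mem_sInf] at this
  push_neg at this
  obtain ⟨p, hp, htp⟩ := this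
  have hpm : p ≠ maximalIdeal R := fun h => htp (h ▸ (ht ▸ Ideal.subset_span rfl : t ∈ _))
  have hbotp : (⊥ : Ideal R).IsPrime := prime_eq_bot_of_ne t ht p hp hpm ▸ hp
  have hmbot : (⊥ : Ideal R) ≠ maximalIdeal R := by
    intro h
    exact ht0 (by simpa using (h ▸ (ht ▸ Ideal.subset_span rfl : t ∈ maximalIdeal R) :
      t ∈ (⊥ : Ideal R)))
  refine ⟨{t}, by simpa using ht, ?_⟩
  have : ringKrullDim R = 1 := by
    have hne : Nonempty (PrimeSpectrum R) := ⟨⟨⊥, hbotp⟩⟩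
    rw [ringKrullDim, Order.krullDim_eq_iSup_length]
    have hlt : (⟨⊥, hbotp⟩ : PrimeSpectrum R) < ⟨maximalIdeal R, inferInstance⟩ := by
      refine lt_of_le_of_ne ?_ ?_
      · show ((⟨⊥, hbotp⟩ : PrimeSpectrum R).asIdeal ≤ _)
        exact bot_le
      · intro h
        exact hmbot (congrArg PrimeSpectrum.asIdeal h)
    have one_le : (1 : ℕ∞) ≤ ⨆ p : LTSeries (PrimeSpectrum R), (p.length : ℕ∞) := by
      refine le_trans ?_ (le_iSup _ (⟨1, ![⟨⊥, hbotp⟩, ⟨maximalIdeal R, inferInstance⟩],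
        fun i => by fin_cases i <;> simpa using hlt⟩ : LTSeries (PrimeSpectrum R)))
      norm_num
    have le_one : (⨆ p : LTSeries (PrimeSpectrum R), (p.length : ℕ∞)) ≤ 1 := by
      refine iSup_le fun c => ?_
      by_contra h
      push_neg at h
      have h2 : 2 ≤ c.length := by exact_mod_cast h
      have h01 : c.toFun ⟨0, by omega⟩ < c.toFun ⟨1, by omega⟩ := by
        have := c.step ⟨0, by omega⟩
        simpa using this
      have h12 : c.toFun ⟨1, by omega⟩ < c.toFun ⟨2, by omega⟩ := by
        have := c.step ⟨1, by omega⟩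
        simpa using this
      have hmid : (c.toFun ⟨1, by omega⟩).asIdeal = ⊥ := by
        refine prime_eq_bot_of_ne t ht _ (c.toFun ⟨1, by omega⟩).isPrime ?_
        intro hmax
        have : (c.toFun ⟨2, by omega⟩).asIdeal ≤ maximalIdeal R :=
          le_maximalIdeal (c.toFun ⟨2, by omega⟩).isPrime.ne_top
        exact h12.ne (PrimeSpectrum.ext (le_antisymm (hmax ▸ h12.le) this |>.symm ▸ hmax)) 
      have : (c.toFun ⟨0, by omega⟩).asIdeal < ⊥ := hmid ▸ h01
      exact absurd this (by simp)
    rw [le_antisymm le_one one_le]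
    rfl
  rw [this]
  simp

end A

section B
variable {R : Type} [CommRing R] [IsLocalRing R]
variable (t : R) (e : ℕ) (ht : Ideal.span {t} = maximalIdeal R)
  (he : t ^ e = 0) (hmin : ∀ j < e, t ^ j ≠ 0)

include ht he hmin

lemma tpow_eq_zero_iff : ∀ j, t ^ j = 0 ↔ e ≤ j := by
  intro j
  constructor
  · intro h
    by_contra hc
    exact hmin j (by omega) h
  · intro h
    have : t ^ j = t ^ e * t ^ (j - e) := by rw [← pow_add]; congr 1; omega
    rw [this, he, zero_mul]

lemma exists_unit_pow (x : R) (hx : x ≠ 0) :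
    ∃ (i : ℕ) (u : Rˣ), i < e ∧ x = ↑u * t ^ i := by
  classical
  have hex : ∃ n, x ∉ Ideal.span {t ^ n} := by
    refine ⟨e, ?_⟩
    rw [he]
    simpa [Ideal.span_singleton_eq_bot.mpr rfl] using hx
  have hspec : x ∉ Ideal.span {t ^ (Nat.find hex)} := Nat.find_spec hex
  have hn0pos : Nat.find hex ≠ 0 := by
    intro h
    rw [h] at hspec
    exact hspec (by simpa [Ideal.span_singleton_eq_top.mpr isUnit_one] using Submodule.mem_top)
  have hne : Nat.find hex ≤ e := Nat.find_le (by
    rw [he]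
    simpa [Ideal.span_singleton_eq_bot.mpr rfl] using hx)
  set i := Nat.find hex - 1 with hi
  have hmem : x ∈ Ideal.span {t ^ i} := by
    by_contra hc
    exact Nat.find_min hex (show i < Nat.find hex by omega) hc
  have hnotmem : x ∉ Ideal.span {t ^ (i + 1)} := by
    have h1 : i + 1 = Nat.find hex := by omega
    rw [h1]
    exact hspec
  obtain ⟨r, hr⟩ := Ideal.mem_span_singleton'.mp hmem
  have hru : IsUnit r := by
    by_contra hrn
    have : r ∈ maximalIdeal R := hrn
    rw [← ht] at this
    obtain ⟨s, hs⟩ := Ideal.mem_span_singleton'.mp this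
    exact hnotmem (Ideal.mem_span_singleton'.mpr ⟨s, by rw [← hr, ← hs]; ring⟩)
  obtain ⟨u, hu⟩ := hru
  exact ⟨i, u, by omega, by rw [← hr, hu]⟩

lemma ann_eq (j : ℕ) (hj : j ≤ e) (r : R) :
    r * t ^ j = 0 ↔ r ∈ Ideal.span ({t ^ (e - j)} : Set R) := by
  constructor
  · intro h
    rcases eq_or_ne r 0 with rfl | hr0
    · exact Submodule.zero_mem _
    obtain ⟨i, u, hie, rfl⟩ := exists_unit_pow t e ht he hmin r hr0
    have hti : (t : R) ^ (i + j) = 0 := by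
      have := congrArg (fun y => (↑u⁻¹ : R) * y) h
      simpa [mul_assoc, ← pow_add, Units.inv_mul_eq_iff_eq_mul] using this
    have hij : e ≤ i + j := (tpow_eq_zero_iff t e ht he hmin _).mp hti
    refine Ideal.mem_span_singleton'.mpr ⟨↑u * t ^ (i - (e - j)), ?_⟩
    rw [mul_assoc, ← pow_add]
    congr 2
    omega
  · intro h
    obtain ⟨a, ha⟩ := Ideal.mem_span_singleton'.mp h
    rw [← ha, mul_assoc, ← pow_add]
    have : e - j + j = e := by omega
    rw [this, he, mul_zero]

end B

section C
variable {R : Type} [CommRing R]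

lemma traceIdeal_congr {M N : Type} [AddCommGroup M] [Module R M] [AddCommGroup N] [Module R N]
    (eqv : M ≃ₗ[R] N) : traceIdeal R M = traceIdeal R N := by
  have key : ∀ (M N : Type) (_ : AddCommGroup M) (_ : Module R M) (_ : AddCommGroup N)
      (_ : Module R N) (eqv : M ≃ₗ[R] N), traceIdeal R M ≤ traceIdeal R N := by
    intro M N _ _ _ _ eqv
    refine iSup_le fun f => ?_
    have : LinearMap.range f = LinearMap.range (f ∘ₗ eqv.symm.toLinearMap) := by
      rw [LinearMap.range_comp, LinearEquiv.range, Submodule.map_top]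
    rw [this]
    exact le_iSup (fun g : N →ₗ[R] R => LinearMap.range g) _
  exact le_antisymm (key M N _ _ _ _ eqv) (key N M _ _ _ _ eqv.symm)

variable [IsLocalRing R] (t : R) (e : ℕ) (ht : Ideal.span {t} = maximalIdeal R)
  (he : t ^ e = 0) (hmin : ∀ j < e, t ^ j ≠ 0)

-- from section B (assume available):
variable (ann_eq' : ∀ j ≤ e, ∀ r : R, (r * t ^ j = 0 ↔ r ∈ Ideal.span ({t ^ (e - j)} : Set R)))

include he ann_eq' in
lemma trace_quot (j : ℕ) (hj : j ≤ e) :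
    traceIdeal R (R ⧸ (Ideal.span ({t ^ j} : Set R))) = Ideal.span ({t ^ (e - j)} : Set R) := by
  apply le_antisymm
  · refine iSup_le fun φ => ?_
    rintro y ⟨x, rfl⟩
    obtain ⟨r, rfl⟩ := Submodule.Quotient.mk_surjective _ x
    have hmk : (Submodule.Quotient.mk r : R ⧸ (Ideal.span ({t ^ j} : Set R)))
        = r • Submodule.Quotient.mk 1 := by
      rw [← Submodule.Quotient.mk_smul, smul_eq_mul, mul_one]
    have ha : φ (Submodule.Quotient.mk 1) * t ^ j = 0 := by
      rw [mul_comm, ← smul_eq_mul, ← map_smul]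
      have : (t ^ j) • (Submodule.Quotient.mk 1 : R ⧸ (Ideal.span ({t ^ j} : Set R))) = 0 := by
        rw [← Submodule.Quotient.mk_smul, smul_eq_mul, mul_one,
          Submodule.Quotient.mk_eq_zero]
        exact Ideal.subset_span rfl
      rw [this, map_zero]
    have hmem := (ann_eq' j hj _).mp ha
    rw [hmk, map_smul, smul_eq_mul]
    exact Ideal.mul_mem_left _ _ hmem
  · have hle : Ideal.span ({t ^ j} : Set R) ≤
        LinearMap.ker (LinearMap.toSpanSingleton R R (t ^ (e - j))) := by
      intro r hr
      obtain ⟨a, ha⟩ := Ideal.mem_span_singleton'.mp hr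
      have : r * t ^ (e - j) = 0 := by
        rw [← ha, mul_assoc, ← pow_add, show j + (e - j) = e by omega, he, mul_zero]
      simpa [LinearMap.mem_ker, LinearMap.toSpanSingleton_apply, smul_eq_mul] using this
    set φ := Submodule.liftQ (Ideal.span ({t ^ j} : Set R))
      (LinearMap.toSpanSingleton R R (t ^ (e - j))) hle with hφ
    have hrange : LinearMap.range φ = Ideal.span ({t ^ (e - j)} : Set R) := by
      rw [hφ, Submodule.range_liftQ, ← LinearMap.span_singleton_eq_range]
    calc Ideal.span ({t ^ (e - j)} : Set R) = LinearMap.range φ := hrange.symm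
      _ ≤ _ := le_iSup (fun g : (R ⧸ (Ideal.span ({t ^ j} : Set R))) →ₗ[R] R =>
          LinearMap.range g) φ

lemma coord_mem {n : ℕ} {x : Fin n → R}
    (hx : x ∈ (maximalIdeal R) • (⊤ : Submodule R (Fin n → R))) (i : Fin n) :
    x i ∈ maximalIdeal R := by
  have hle : (maximalIdeal R) • (⊤ : Submodule R (Fin n → R)) ≤
      Submodule.pi Set.univ (fun _ : Fin n => (maximalIdeal R : Submodule R R)) := by
    refine Submodule.smul_le.mpr fun r hr v _ => ?_
    refine Submodule.mem_pi.mpr fun i _ => ?_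
    simpa using Ideal.mul_mem_right (v i) _ hr
  exact Submodule.mem_pi.mp (hle hx) i trivial

include ht he ann_eq' in
lemma syzygy_step (j : ℕ) (hj1 : 1 ≤ j) (hje : j ≤ e)
    {S : Type} [AddCommGroup S] [Module R S]
    (eS : S ≃ₗ[R] R ⧸ Ideal.span ({t ^ j} : Set R))
    {n : ℕ} (f : (Fin n → R) →ₗ[R] S) (hf : Function.Surjective f)
    (hker : LinearMap.ker f ≤ maximalIdeal R • (⊤ : Submodule R (Fin n → R))) :
    Nonempty ((LinearMap.ker f) ≃ₗ[R] R ⧸ Ideal.span ({t ^ (e - j)} : Set R)) := by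
  classical
  set I := Ideal.span ({t ^ j} : Set R) with hI
  have hIm : I ≤ maximalIdeal R := by
    rw [hI, ← ht]
    refine Ideal.span_le.mpr (Set.singleton_subset_iff.mpr ?_)
    exact Ideal.mem_span_singleton'.mpr ⟨t ^ (j - 1), by rw [← pow_succ]; congr 1; omega⟩
  set g := (eS.toLinearMap.comp f) with hg
  have hgker : LinearMap.ker g = LinearMap.ker f := eS.ker_comp f
  have hgsurj : Function.Surjective g := eS.surjective.comp hf
  -- lifts of the images of basis vectors
  have hb : ∀ i : Fin n, ∃ b : R, Submodule.Quotient.mk b = g (Pi.single i 1) :=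
    fun i => Submodule.Quotient.mk_surjective _ _
  choose b hbspec using hb
  have hgx : ∀ x : Fin n → R, g x = Submodule.Quotient.mk (∑ i, x i * b i) := by
    intro x
    have hsingle : ∀ i : Fin n, (fun j => if i = j then (1:R) else 0) = Pi.single i 1 := by
      intro i; funext k; simp [Pi.single_apply, eq_comm]
    conv_lhs => rw [pi_eq_sum_univ x]
    rw [map_sum]
    simp only [hsingle, map_smul, ← hbspec]
    show ∑ i, x i • Submodule.mkQ I (b i) = Submodule.mkQ I (∑ i, x i * b i)
    rw [map_sum]
    simp only [← map_smul, smul_eq_mul]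
  -- find a unit coordinate
  obtain ⟨x1, hx1⟩ := hgsurj (Submodule.Quotient.mk 1)
  have hsum : (∑ i, x1 i * b i) - 1 ∈ I :=
    (Submodule.Quotient.eq I).mp (by rw [← hgx x1, hx1])
  have hone : (1 : R) ∉ maximalIdeal R :=
    (Ideal.ne_top_iff_one _).mp (maximalIdeal.isMaximal R).ne_top
  have hexu : ∃ i0 : Fin n, b i0 ∉ maximalIdeal R := by
    by_contra hc
    push_neg at hc
    have hs : (∑ i, x1 i * b i) ∈ maximalIdeal R :=
      Ideal.sum_mem _ fun i _ => Ideal.mul_mem_left _ _ (hc i)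
    have h1 : (1 : R) ∈ maximalIdeal R := by
      have := Submodule.sub_mem _ hs (hIm hsum)
      simpa using this
    exact hone h1
  obtain ⟨i0, hi0⟩ := hexu
  have hbu : IsUnit (b i0) := by
    by_contra hnu
    exact hi0 (IsLocalRing.mem_maximalIdeal _ |>.mpr hnu)
  obtain ⟨u, hu⟩ := hbu
  have huniq : ∀ i : Fin n, i = i0 := by
    intro i1
    by_contra hne
    set v : Fin n → R := (Pi.single i1 1 : Fin n → R) - (b i1 * ↑u⁻¹) • (Pi.single i0 (1:R) : Fin n → R) with hv
    have hgv : g v = 0 := by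
      rw [hv, map_sub, map_smul, ← hbspec, ← hbspec,
        ← Submodule.Quotient.mk_smul, smul_eq_mul]
      have hb1 : b i1 * ↑u⁻¹ * b i0 = b i1 := by
        rw [← hu, mul_assoc]
        simp
      rw [hb1, sub_self]
    have hvker : v ∈ LinearMap.ker f := hgker ▸ (LinearMap.mem_ker.mpr hgv)
    have hco := coord_mem (hker hvker) i1
    rw [hv] at hco
    simp only [Pi.sub_apply, Pi.smul_apply, Pi.single_eq_same,
      Pi.single_eq_of_ne hne, smul_eq_mul, mul_zero, sub_zero] at hco
    exact hone hco
  have hxdet : ∀ x : Fin n → R, x = x i0 • (Pi.single i0 (1:R) : Fin n → R) := by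
    intro x; funext i; rw [huniq i]; simp
  have hgx0 : ∀ x : Fin n → R, g x = Submodule.Quotient.mk (x i0 * b i0) := by
    intro x
    conv_lhs => rw [hxdet x]
    rw [map_smul, ← hbspec, ← Submodule.Quotient.mk_smul, smul_eq_mul]
  set w : Fin n → R := Pi.single i0 (t ^ j * ↑u⁻¹ : R) with hw
  have hwi0 : w i0 = t ^ j * ↑u⁻¹ := by rw [hw]; simp
  have hwker : ∀ r : R, r • w ∈ LinearMap.ker f := by
    intro r
    refine hgker.le (LinearMap.mem_ker.mpr ?_)
    rw [hgx0]
    have hc : (r • w) i0 * b i0 = r * t ^ j := by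
      rw [Pi.smul_apply, hwi0, ← hu, smul_eq_mul, ← mul_assoc, mul_assoc (r * t ^ j)]
      simp
    rw [hc, Submodule.Quotient.mk_eq_zero]
    exact Ideal.mem_span_singleton'.mpr ⟨r, rfl⟩
  set β : R →ₗ[R] (LinearMap.ker f) :=
    LinearMap.codRestrict _ (LinearMap.toSpanSingleton R _ w) hwker with hβ
  have hβsurj : Function.Surjective β := by
    rintro ⟨x, hx⟩
    have hgx00 : g x = 0 := LinearMap.mem_ker.mp (hgker.ge hx)
    rw [hgx0] at hgx00
    obtain ⟨s, hs⟩ := Ideal.mem_span_singleton'.mp ((Submodule.Quotient.mk_eq_zero _).mp hgx00)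
    refine ⟨s, Subtype.ext ?_⟩
    show s • w = x
    have hxi0 : x i0 = s * t ^ j * ↑u⁻¹ := by
      rw [hs, ← hu, mul_assoc]
      simp
    conv_rhs => rw [hxdet x]
    funext i
    rw [huniq i]
    simp [hwi0, hxi0, mul_assoc]
  have hβker : LinearMap.ker β = Ideal.span ({t ^ (e - j)} : Set R) := by
    ext r
    rw [hβ, LinearMap.mem_ker, ← Submodule.coe_eq_zero]
    change LinearMap.toSpanSingleton R (Fin n → R) w r = 0 ↔ _
    simp only [LinearMap.mem_ker, LinearMap.toSpanSingleton_apply]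
    constructor
    · intro h
      have h1 := congrFun h i0
      rw [Pi.smul_apply, hwi0, smul_eq_mul] at h1
      have h0 : r * t ^ j = 0 := by
        have h2 := congrArg (fun y : R => y * ↑u) h1
        simpa [mul_assoc] using h2
      exact (ann_eq' j hje r).mp h0
    · intro hr
      have h0 : r * t ^ j = 0 := (ann_eq' j hje r).mpr hr
      funext i
      rw [huniq i]
      rw [Pi.smul_apply, hwi0, smul_eq_mul, ← mul_assoc, h0, zero_mul]
      simp
  exact ⟨((LinearMap.quotKerEquivOfSurjective β hβsurj).symm.trans
    (Submodule.quotEquivOfEq _ _ hβker))⟩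

end C

/-- `IsSyzygy R i N` says that `N` is (isomorphic to) the `i`-th syzygy `Ω^i_R(k)` of the
residue field `k` in a minimal free resolution over the local ring `R`, with
`Ω^0_R(k) = k`.  Minimality at each step is expressed by requiring the kernel of the
chosen surjection from a finite free module to be contained in `m` times the free
module. -/
def IsSyzygy (R : Type) [CommRing R] [IsLocalRing R] :
    ℕ → (N : Type) → [AddCommGroup N] → [Module R N] → Prop
  | 0, N, _, _ => Nonempty (N ≃ₗ[R] IsLocalRing.ResidueField R)
  | i + 1, N, _, _ => ∃ (S : Type) (_ : AddCommGroup S) (_ : Module R S) (n : ℕ)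
      (f : (Fin n → R) →ₗ[R] S), IsSyzygy R i S ∧ Function.Surjective f ∧
      LinearMap.ker f ≤ (IsLocalRing.maximalIdeal R) • (⊤ : Submodule R (Fin n → R)) ∧
      Nonempty (N ≃ₗ[R] LinearMap.ker f)

section E
variable {R : Type} [CommRing R] [IsLocalRing R]
variable (t : R) (e : ℕ) (ht : Ideal.span {t} = maximalIdeal R)
  (he : t ^ e = 0)
variable (ann_eq' : ∀ j ≤ e, ∀ r : R, (r * t ^ j = 0 ↔ r ∈ Ideal.span ({t ^ (e - j)} : Set R)))

include ht he ann_eq' in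
lemma syzygy_class (he2 : 2 ≤ e) :
    ∀ (i : ℕ) (N : Type) [AddCommGroup N] [Module R N], IsSyzygy R i N →
    Nonempty (N ≃ₗ[R] R ⧸ Ideal.span ({t ^ (if Even i then 1 else e - 1)} : Set R)) := by
  intro i
  induction i with
  | zero =>
    intro N _ _ h
    obtain ⟨q⟩ := h
    have h0 : (if Even 0 then 1 else e - 1) = 1 := by simp
    rw [h0]
    exact ⟨q.trans (Submodule.quotEquivOfEq (maximalIdeal R) (Ideal.span ({t ^ 1} : Set R))
      (by rw [pow_one, ht]))⟩
  | succ i ih =>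
    intro N _ _ h
    obtain ⟨S, _, _, n, f, hS, hf, hker, ⟨qN⟩⟩ := h
    obtain ⟨qS⟩ := ih S hS
    set j := (if Even i then 1 else e - 1) with hj
    have hj1 : 1 ≤ j := by rw [hj]; split <;> omega
    have hje : j ≤ e := by rw [hj]; split <;> omega
    obtain ⟨qK⟩ := syzygy_step t e ht he ann_eq' j hj1 hje qS f hf hker
    have hnext : e - j = (if Even (i + 1) then 1 else e - 1) := by
      rcases Nat.even_or_odd i with hpar | hpar
      · simp [hj, hpar, Nat.even_add_one]
      · simp only [hj, Nat.not_even_iff_odd.mpr hpar, if_false, Nat.even_add_one,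
          Nat.not_even_iff_odd.mpr hpar, not_false_iff, if_true]
        omega
    rw [← hnext]
    exact ⟨qN.trans qK⟩

end E

/-- Let `(R, m, k)` be a non-regular Noetherian local principal ideal ring with
`m^2 ≠ 0`.  Then the odd syzygies `Ω^{2i+1}_R(k)` are full-trace, while the positive
even syzygies `Ω^{2i+2}_R(k)` are not. -/
theorem odd_syzygies_full_trace (R : Type) [CommRing R] [IsNoetherianRing R]
    [IsLocalRing R] [IsPrincipalIdealRing R] (hreg : ¬ IsRegularLocal R)
    (h2 : maximalIdeal R ^ 2 ≠ ⊥) :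
    ∀ (i : ℕ) (N : Type) [AddCommGroup N] [Module R N],
      (IsSyzygy R (2 * i + 1) N → traceIdeal R N = maximalIdeal R) ∧
      (IsSyzygy R (2 * i + 2) N → traceIdeal R N ≠ maximalIdeal R) := by
  classical
  obtain ⟨t, ht0⟩ := (IsPrincipalIdealRing.principal (maximalIdeal R)).principal
  have ht : Ideal.span {t} = maximalIdeal R := ht0.symm
  have hnil : IsNilpotent t := by
    by_contra hn
    exact hreg (regular_of_not_nilpotent t ht hn)
  set e := Nat.find hnil with hE
  have he : t ^ e = 0 := Nat.find_spec hnil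
  have hmin : ∀ j < e, t ^ j ≠ 0 := fun j hj => Nat.find_min hnil hj
  have ht2 : t ^ 2 ≠ 0 := by
    intro h
    apply h2
    rw [← ht, Ideal.span_singleton_pow, h, Ideal.span_singleton_eq_bot.mpr rfl]
  have he3 : 3 ≤ e := by
    by_contra hc
    exact ht2 ((tpow_eq_zero_iff t e ht he hmin 2).mpr (by omega))
  have ann_eq' : ∀ j ≤ e, ∀ r : R, (r * t ^ j = 0 ↔ r ∈ Ideal.span ({t ^ (e - j)} : Set R)) :=
    fun j hj r => ann_eq t e ht he hmin j hj r
  intro i N _ _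
  constructor
  · intro h
    obtain ⟨q⟩ := syzygy_class t e ht he ann_eq' (by omega) (2 * i + 1) N h
    have hodd : (if Even (2 * i + 1) then 1 else e - 1) = e - 1 := by
      simp [Nat.even_add_one, parity_simps]
    rw [hodd] at q
    rw [traceIdeal_congr q, trace_quot t e he ann_eq' (e - 1) (by omega),
      show e - (e - 1) = 1 by omega, pow_one, ht]
  · intro h heq
    obtain ⟨q⟩ := syzygy_class t e ht he ann_eq' (by omega) (2 * i + 2) N h
    have heven : (if Even (2 * i + 2) then 1 else e - 1) = 1 := by
      simp [Nat.even_add_one, parity_simps]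
    rw [heven] at q
    rw [traceIdeal_congr q, trace_quot t e he ann_eq' 1 (by omega)] at heq
    have htm : t ∈ Ideal.span ({t ^ (e - 1)} : Set R) := by
      rw [heq, ← ht]
      exact Ideal.subset_span rfl
    obtain ⟨r, hr⟩ := Ideal.mem_span_singleton'.mp htm
    apply ht2
    have : t * t = (r * t ^ (e - 1)) * t := by rw [hr]
    rw [mul_assoc, ← pow_succ, show e - 1 + 1 = e by omega, he, mul_zero] at this
    rw [pow_two]
    exact this
end

section
/- Let (R, m) be a one-dimensional Cohen–Macaulay local ring with infinite residue field. If M is an Ulrich R-module, then tr_R(M) is either equal to R or is itself an Ulrich R-module. -/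
open IsLocalRing

/-- A finitely generated module `M` over a Noetherian local ring `R` is maximal
Cohen–Macaulay if it is nonzero and admits an `M`-regular sequence in the maximal ideal
of length equal to the Krull dimension of `R` (i.e. `depth M = dim R`). -/
def IsMaximalCohenMacaulay (R M : Type) [CommRing R] [IsLocalRing R]
    [AddCommGroup M] [Module R M] : Prop :=
  Nontrivial M ∧ ∃ rs : List R, (∀ r ∈ rs, r ∈ IsLocalRing.maximalIdeal R) ∧
    (rs.length : WithBot ℕ∞) = ringKrullDim R ∧ RingTheory.Sequence.IsRegular M rs

/-- A parameter ideal of a local ring: an `m`-primary ideal generated by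
`dim R` many elements. -/
def IsParameterIdeal (R : Type) [CommRing R] [IsLocalRing R] (q : Ideal R) : Prop :=
  ∃ s : Finset R, Ideal.span (s : Set R) = q ∧ (s.card : WithBot ℕ∞) = ringKrullDim R ∧
    q.radical = IsLocalRing.maximalIdeal R

/-- `q` is a reduction of `I` if `q ≤ I` and `I^(n+1) = q * I^n` for some `n`. -/
def IsReductionOf (R : Type) [CommRing R] (q I : Ideal R) : Prop :=
  q ≤ I ∧ ∃ n : ℕ, I ^ (n + 1) = q * I ^ n

/-- An Ulrich module: a maximal Cohen–Macaulay module which is maximally generated,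
expressed equivalently by `mM = qM` for a parameter ideal `q` which is a reduction
of `m`. -/
def IsUlrich (R M : Type) [CommRing R] [IsLocalRing R] [AddCommGroup M] [Module R M] :
    Prop :=
  IsMaximalCohenMacaulay R M ∧ ∃ q : Ideal R, IsParameterIdeal R q ∧
    IsReductionOf R q (IsLocalRing.maximalIdeal R) ∧
    (IsLocalRing.maximalIdeal R) • (⊤ : Submodule R M) = q • (⊤ : Submodule R M)

lemma exists_socle_elt (A : Type*) [CommRing A] [IsLocalRing A]
    (hnil : IsNilpotent (maximalIdeal A)) :
    ∃ z : A, z ≠ 0 ∧ ∀ r ∈ maximalIdeal A, r * z = 0 := by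
  classical
  obtain ⟨k, hk⟩ := hnil
  have hex : ∃ k, (maximalIdeal A) ^ k = ⊥ := ⟨k, hk⟩
  have hk0spec : (maximalIdeal A) ^ (Nat.find hex) = ⊥ := Nat.find_spec hex
  have hk0ne : Nat.find hex ≠ 0 := by
    intro h
    rw [h, pow_zero, Ideal.one_eq_top] at hk0spec
    have h1 : (1 : A) ∈ (⊤ : Ideal A) := Submodule.mem_top
    rw [hk0spec] at h1
    have h2 : (1 : A) = 0 := by simpa using h1
    exact one_ne_zero h2
  obtain ⟨k1, hsucc⟩ := Nat.exists_eq_succ_of_ne_zero hk0ne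
  have hne : (maximalIdeal A) ^ k1 ≠ ⊥ :=
    Nat.find_min hex (by omega)
  obtain ⟨z, hz, hz0⟩ := (Submodule.ne_bot_iff _).mp hne
  refine ⟨z, hz0, fun r hr => ?_⟩
  have h2 : r * z ∈ (maximalIdeal A) ^ (k1 + 1) := by
    rw [pow_succ, mul_comm r z]
    exact Ideal.mul_mem_mul hz hr
  have hb : (maximalIdeal A) ^ (k1 + 1) = ⊥ := by
    rw [← Nat.succ_eq_add_one, ← hsucc]; exact hk0spec
  rw [hb] at h2
  simpa using h2

lemma exists_linearMap_ne_zero (A N : Type*) [CommRing A] [IsLocalRing A]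
    [AddCommGroup N] [Module A N] [Module.Finite A N] [Nontrivial N]
    (hnil : IsNilpotent (maximalIdeal A)) :
    ∃ g : N →ₗ[A] A, g ≠ 0 := by
  obtain ⟨z, hz0, hz⟩ := exists_socle_elt A hnil
  set n := maximalIdeal A with hn
  -- the quotient N / nN is a nonzero vector space over A/n
  have htop : (n • ⊤ : Submodule A N) ≠ ⊤ := by
    intro h
    have h2 := Submodule.eq_bot_of_le_smul_of_le_jacobson_bot n ⊤
      (Module.finite_def.mp inferInstance) (le_of_eq h.symm)
      (by rw [IsLocalRing.jacobson_eq_maximalIdeal ⊥ bot_ne_top])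
    rw [eq_comm, subsingleton_iff_bot_eq_top] at h2
    exact not_subsingleton N ((Submodule.subsingleton_iff _).mp h2)
  haveI : Nontrivial (N ⧸ (n • ⊤ : Submodule A N)) :=
    Submodule.Quotient.nontrivial_iff.mpr htop
  -- A/n is a field, V is a vector space over it
  set K := A ⧸ n with hK
  set V := N ⧸ (n • ⊤ : Submodule A N) with hV
  letI : Field K := Ideal.Quotient.field n
  have b := Module.Basis.ofVectorSpace K V
  obtain ⟨i⟩ := b.index_nonempty
  let lam := b.coord i
  -- the map A/n → A sending [a] to a*z
  have hker : n ≤ LinearMap.ker (LinearMap.toSpanSingleton A A z) := by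
    intro r hr
    simp only [LinearMap.mem_ker, LinearMap.toSpanSingleton_apply, smul_eq_mul]
    exact hz r hr
  set sigma : K →ₗ[A] A := Submodule.liftQ n (LinearMap.toSpanSingleton A A z) hker
  have hsigma : ∀ a : A, sigma (Ideal.Quotient.mk n a) = a * z := fun a => rfl
  -- assemble
  refine ⟨{ toFun := fun x => sigma (lam (Submodule.Quotient.mk x))
            map_add' := by intro x y; simp [Submodule.Quotient.mk_add]
            map_smul' := ?_ }, ?_⟩
  · intro a x
    simp only [RingHom.id_apply]
    have h1 : (Submodule.Quotient.mk (a • x) : V) =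
        (Ideal.Quotient.mk n a) • (Submodule.Quotient.mk x : V) := rfl
    rw [h1, map_smul]
    obtain ⟨c, hc⟩ := Ideal.Quotient.mk_surjective (lam (Submodule.Quotient.mk x))
    rw [← hc]
    have h4 : (Ideal.Quotient.mk n a) • (Ideal.Quotient.mk n c) =
        Ideal.Quotient.mk n (a * c) := by rw [smul_eq_mul, ← map_mul]
    rw [h4, hsigma, hsigma, smul_eq_mul, ← mul_assoc]
  · intro h
    obtain ⟨x, hx⟩ := Submodule.Quotient.mk_surjective _ (b i)
    have h1 := congrArg (fun g => g x) h
    simp only [LinearMap.coe_mk, AddHom.coe_mk, LinearMap.zero_apply] at h1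
    rw [hx] at h1
    have h2 : lam (b i) = 1 := by simp [lam]
    rw [h2] at h1
    have h3 : sigma (1 : K) = z := by
      have := hsigma 1
      simpa using this
    rw [h3] at h1
    exact hz0 h1


lemma exists_hom_ne_zero (R M : Type) [CommRing R] [IsNoetherianRing R]
    [IsLocalRing R] [AddCommGroup M] [Module R M] [Module.Finite R M]
    (hdim : ringKrullDim R = 1) [Nontrivial M]
    (y : R) (hy : y ∈ maximalIdeal R) (hyreg : IsSMulRegular M y) :
    ∃ f : M →ₗ[R] R, f ≠ 0 := by
  classical
  -- pick an associated prime p of M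
  obtain ⟨p, hp⟩ := associatedPrimes.nonempty R M
  obtain ⟨hpprime, x, hx⟩ := isAssociatedPrime_iff.mp hp
  haveI := hpprime
  have hx0 : x ≠ 0 := by
    rintro rfl
    apply hpprime.ne_top
    rw [hx]
    exact Submodule.colon_singleton_zero
  have hyp : y ∉ p := by
    intro hyp
    apply hx0
    rw [hx] at hyp
    have := Submodule.mem_colon_singleton.mp hyp
    exact hyreg (by simpa using this)
  have hplem : p ≤ maximalIdeal R := le_maximalIdeal hpprime.ne_top
  have hpm : p ≠ maximalIdeal R := fun h => hyp (h ▸ hy)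
  -- p is a minimal prime
  have hmin : ∀ q : Ideal R, q.IsPrime → q ≤ p → q = p := by
    intro q hq hqp
    by_contra hne
    have hqlt : q < p := lt_of_le_of_ne hqp hne
    have hplt : p < maximalIdeal R := lt_of_le_of_ne hplem hpm
    let c : LTSeries (PrimeSpectrum R) :=
      ⟨2, ![⟨q, hq⟩, ⟨p, hpprime⟩, ⟨maximalIdeal R, (maximalIdeal.isMaximal R).isPrime⟩],
        by
          intro i
          fin_cases i
          · exact hqlt
          · exact hplt⟩
    have hle := Order.LTSeries.length_le_krullDim c
    rw [show ringKrullDim R = Order.krullDim (PrimeSpectrum R) from rfl] at hdim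
    rw [hdim] at hle
    norm_num at hle
  -- localize at p
  set A := Localization.AtPrime p
  haveI : IsNoetherianRing A := IsLocalization.isNoetherianRing p.primeCompl A inferInstance
  -- the maximal ideal of A is nilpotent
  have hnil : IsNilpotent (maximalIdeal A) := by
    obtain ⟨k, hk⟩ := IsNoetherianRing.isNilpotent_nilradical A
    refine ⟨k, ?_⟩
    have hle : maximalIdeal A ≤ nilradical A := by
      intro a ha
      rw [nilradical_eq_sInf]
      refine Submodule.mem_sInf.mpr ?_
      intro Q hQ
      haveI hQp : Ideal.IsPrime Q := hQ
      have hcom : (Ideal.comap (algebraMap R A) Q).IsPrime ∧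
          Disjoint (p.primeCompl : Set R) (Ideal.comap (algebraMap R A) Q : Set R) :=
        (IsLocalization.isPrime_iff_isPrime_disjoint p.primeCompl A Q).mp hQp
      have hsub : Ideal.comap (algebraMap R A) Q ≤ p := by
        intro r hr
        by_contra hrp
        exact Set.disjoint_left.mp hcom.2 hrp hr
      have heq : Ideal.comap (algebraMap R A) Q = p := hmin _ hcom.1 hsub
      have hmap : Ideal.map (algebraMap R A) p ≤ Q :=
        le_trans (Ideal.map_mono (le_of_eq heq.symm)) Ideal.map_comap_le
      refine hmap ?_
      rw [Localization.AtPrime.map_eq_maximalIdeal]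
      exact ha
    have h2 : (maximalIdeal A) ^ k ≤ (nilradical A) ^ k := Ideal.pow_right_mono hle k
    rw [hk] at h2
    exact le_bot_iff.mp h2
  -- the localized module is nonzero
  set N := LocalizedModule p.primeCompl M
  haveI : Module.Finite A N :=
    Module.Finite.of_isLocalizedModule p.primeCompl
      (LocalizedModule.mkLinearMap p.primeCompl M)
  haveI : Nontrivial N := by
    refine nontrivial_of_ne (LocalizedModule.mkLinearMap p.primeCompl M x) 0 ?_
    intro h
    obtain ⟨s, hs⟩ := (IsLocalizedModule.eq_zero_iff p.primeCompl
      (LocalizedModule.mkLinearMap p.primeCompl M)).mp h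
    have hs' : (s : R) • x = 0 := hs
    have h5 : (s : R) ∈ (Submodule.span R {x}).annihilator :=
      Submodule.mem_annihilator.mpr fun m hm => by
        obtain ⟨c, rfl⟩ := Submodule.mem_span_singleton.mp hm
        rw [smul_comm, hs', smul_zero]
    have : (s : R) ∈ p := hx ▸ Submodule.mem_colon_singleton.mpr (by simpa using hs')
    exact s.2 this
  -- get a nonzero functional over A
  obtain ⟨g, hg⟩ := exists_linearMap_ne_zero A N hnil
  -- transfer back: Hom(M,R) localizes to Hom(N,A)
  by_contra hcon
  push_neg at hcon
  haveI : Module.FinitePresentation R M := Module.finitePresentation_of_finite R M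
  haveI : IsLocalizedModule p.primeCompl (Algebra.linearMap R A) :=
    (isLocalizedModule_iff_isLocalization' p.primeCompl A).mpr inferInstance
  set F := IsLocalizedModule.mapExtendScalars p.primeCompl
    (LocalizedModule.mkLinearMap p.primeCompl M) (Algebra.linearMap R A) A
  haveI : IsLocalizedModule p.primeCompl F :=
    Module.FinitePresentation.isLocalizedModule_mapExtendScalars _ _ _ _
  obtain ⟨⟨f, s⟩, hfs⟩ := IsLocalizedModule.surj p.primeCompl F g
  rw [hcon f, map_zero] at hfs
  have hu := (Module.End.isUnit_iff _).mp (IsLocalizedModule.map_units F s)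
  apply hg
  apply hu.injective
  rw [map_zero, Module.algebraMap_end_apply]
  exact hfs


/-- Let `(R, m)` be a one-dimensional Cohen–Macaulay local ring with infinite residue
field.  If `M` is an Ulrich `R`-module, then `tr_R(M)` is either `R` or is itself an
Ulrich `R`-module. -/
theorem traceIdeal_of_ulrich (R M : Type) [CommRing R] [IsNoetherianRing R]
    [IsLocalRing R] [AddCommGroup M] [Module R M] [Module.Finite R M]
    (hCM : IsMaximalCohenMacaulay R R) (hdim : ringKrullDim R = 1)
    (hk : Infinite (ResidueField R)) (hU : IsUlrich R M) :
    traceIdeal R M = ⊤ ∨ IsUlrich R (traceIdeal R M) := by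
  set_option maxHeartbeats 1000000 in
  by_cases hT : traceIdeal R M = ⊤
  · exact Or.inl hT
  right
  set T := traceIdeal R M with hTdef
  obtain ⟨⟨hMnt, hMCM⟩, q, hqpar, hqred, hqsmul⟩ := hU
  haveI := hMnt
  -- extract the regular element on M
  obtain ⟨rsM, hrsMmem, hrsMlen, hrsMreg⟩ := hMCM
  rw [hdim] at hrsMlen
  have hlenM : rsM.length = 1 := by exact_mod_cast hrsMlen
  obtain ⟨yM, rfl⟩ := List.length_eq_one_iff.mp hlenM
  have hyMmem : yM ∈ maximalIdeal R := hrsMmem yM (List.mem_singleton_self yM)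
  have hyMreg : IsSMulRegular M yM :=
    (RingTheory.Sequence.isWeaklyRegular_singleton_iff M yM).mp hrsMreg.toIsWeaklyRegular
  -- T is nonzero
  obtain ⟨f0, hf0⟩ := exists_hom_ne_zero R M hdim yM hyMmem hyMreg
  have hTne : T ≠ ⊥ := by
    intro h
    apply hf0
    rw [← LinearMap.range_eq_bot, ← le_bot_iff, ← h]
    exact le_iSup (fun f : M →ₗ[R] R => LinearMap.range f) f0
  haveI hTnt : Nontrivial T := by
    obtain ⟨t, ht, ht0⟩ := (Submodule.ne_bot_iff T).mp hTne
    exact nontrivial_of_ne ⟨t, ht⟩ 0 (fun h => ht0 (congrArg Subtype.val h))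
  have hTfg : Module.Finite R T := Module.Finite.iff_fg.mpr (IsNoetherian.noetherian T)
  -- the regular element from hCM
  obtain ⟨_, rs, hmem, hlen, hreg⟩ := hCM
  rw [hdim] at hlen
  have hlen1 : rs.length = 1 := by exact_mod_cast hlen
  obtain ⟨y, rfl⟩ := List.length_eq_one_iff.mp hlen1
  have hymem : y ∈ maximalIdeal R := hmem y (List.mem_singleton_self y)
  have hyreg : IsSMulRegular R y :=
    (RingTheory.Sequence.isWeaklyRegular_singleton_iff R y).mp hreg.toIsWeaklyRegular
  refine ⟨⟨hTnt, [y], fun r hr => by rw [List.mem_singleton.mp hr]; exact hymem, by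
      rw [hdim]; rfl, ?_⟩, q, hqpar, hqred, ?_⟩
  · -- [y] is a regular sequence on T
    refine { toIsWeaklyRegular := ?_, top_ne_smul := ?_ }
    ·
      refine (RingTheory.Sequence.isWeaklyRegular_singleton_iff _ y).mpr ?_
      intro a b hab
      have : y • (a : R) = y • (b : R) := congrArg Subtype.val hab
      exact Subtype.ext (hyreg this)
    ·
      intro h
      have hsp : Ideal.ofList [y] ≤ maximalIdeal R := by
        rw [Ideal.ofList_singleton, Ideal.span_le]
        simpa using hymem
      have hle : (⊤ : Submodule R T) ≤ maximalIdeal R • ⊤ :=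
        le_trans (le_of_eq h) (Submodule.smul_mono_left hsp)
      have h2 := Submodule.eq_bot_of_le_smul_of_le_jacobson_bot (maximalIdeal R)
        (⊤ : Submodule R T) (Module.finite_def.mp hTfg) hle
        (by rw [IsLocalRing.jacobson_eq_maximalIdeal ⊥ bot_ne_top])
      rw [eq_comm, subsingleton_iff_bot_eq_top] at h2
      exact not_subsingleton T ((Submodule.subsingleton_iff _).mp h2)
  · -- m T = q T
    have key : ∀ f : M →ₗ[R] R,
        maximalIdeal R • LinearMap.range f = q • LinearMap.range f := by
      intro f
      have := congrArg (Submodule.map f) hqsmul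
      rwa [Submodule.map_smul'', Submodule.map_smul'', Submodule.map_top] at this
    have hideal : maximalIdeal R • (T : Submodule R R) = q • (T : Submodule R R) := by
      rw [hTdef]
      show maximalIdeal R • (⨆ f : M →ₗ[R] R, LinearMap.range f)
        = q • (⨆ f : M →ₗ[R] R, LinearMap.range f)
      rw [Submodule.smul_iSup, Submodule.smul_iSup]
      exact iSup_congr key
    apply Submodule.map_injective_of_injective (f := T.subtype) Subtype.val_injective
    rw [Submodule.map_smul'', Submodule.map_smul'', Submodule.map_top,
      Submodule.range_subtype]
    exact hideal
end

section
/- Let (R, m) be a Cohen–Macaulay local ring with infinite residue field. If there exists a full-trace Ulrich R-module M (i.e., M is Ulrich and tr_R(M) = m), then R has minimal multiplicity, i.e., m^2 = q·m for some parameter ideal q of R that is a reduction of m. -/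
open IsLocalRing

/-- Let `(R, m)` be a Cohen–Macaulay local ring with infinite residue field.  If there
exists a full-trace Ulrich `R`-module `M` (i.e. `M` Ulrich with `tr_R(M) = m`), then `R`
has minimal multiplicity: `m^2 = q·m` for some parameter ideal `q` which is a reduction
of `m`. -/
theorem minimal_multiplicity_of_full_trace_ulrich (R M : Type) [CommRing R]
    [IsNoetherianRing R] [IsLocalRing R] [AddCommGroup M] [Module R M] [Module.Finite R M]
    (hCM : IsMaximalCohenMacaulay R R) (hk : Infinite (ResidueField R))
    (hU : IsUlrich R M) (htr : traceIdeal R M = maximalIdeal R) :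
    ∃ q : Ideal R, IsParameterIdeal R q ∧ IsReductionOf R q (maximalIdeal R) ∧
      maximalIdeal R ^ 2 = q * maximalIdeal R := by
  obtain ⟨_, q, hq, hred, heq⟩ := hU
  refine ⟨q, hq, hred, ?_⟩
  have hf : ∀ f : M →ₗ[R] R, maximalIdeal R • LinearMap.range f = q • LinearMap.range f := by
    intro f
    rw [LinearMap.range_eq_map, ← Submodule.map_smul'', heq, Submodule.map_smul'']
  have key : maximalIdeal R • traceIdeal R M = q • traceIdeal R M := by
    unfold traceIdeal
    rw [Submodule.smul_iSup, Submodule.smul_iSup]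
    exact iSup_congr hf
  rw [htr] at key
  calc maximalIdeal R ^ 2 = maximalIdeal R • maximalIdeal R := by
        rw [smul_eq_mul, pow_two]
    _ = q • maximalIdeal R := key
    _ = q * maximalIdeal R := smul_eq_mul _ _
end
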